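/- Let k be a field with char k ≠ 2, m,n ≥ 1 integers, D an invertible diagonal n×n matrix over k, and M = 0_m ⊕ D. Then the Lie algebra o(M) is solvable if and only if m ≤ 1 and n ≤ 2. -/

import Mathlib

open Matrix LieAlgebra

attribute [local instance 100] LieRing.ofAssociativeRing

/-- The Lie algebra `o(M) = {X ∈ gl | Xᵀ * M + M * X = 0}` of matrices preserving the
bilinear form with Gram matrix `M`. -/
def lieO (k : Type) [Field k] {ι : Type} [Fintype ι] [DecidableEq ι]
    (M : Matrix ι ι k) : LieSubalgebra k (Matrix ι ι k) where
  carrier := {X | Xᵀ * M + M * X = 0}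
  zero_mem' := by simp
  add_mem' := by
    intro X Y hX hY
    simp only [Set.mem_setOf_eq] at *
    rw [Matrix.transpose_add, Matrix.add_mul, Matrix.mul_add, add_add_add_comm, hX, hY, add_zero]
  smul_mem' := by
    intro c X hX
    simp only [Set.mem_setOf_eq] at *
    rw [Matrix.transpose_smul, Matrix.smul_mul, Matrix.mul_smul, ← smul_add, hX, smul_zero]
  lie_mem' := by
    intro X Y hX hY
    simp only [Set.mem_setOf_eq] at *
    have hX' : Xᵀ * M = -(M * X) := eq_neg_of_add_eq_zero_left hX
    have hY' : Yᵀ * M = -(M * Y) := eq_neg_of_add_eq_zero_left hY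
    have h1 : Yᵀ * Xᵀ * M = M * Y * X := by
      rw [mul_assoc, hX', mul_neg, ← mul_assoc, hY', neg_mul, neg_neg]
    have h2 : Xᵀ * Yᵀ * M = M * X * Y := by
      rw [mul_assoc, hY', mul_neg, ← mul_assoc, hX', neg_mul, neg_neg]
    simp only [Ring.lie_def, Matrix.transpose_sub, Matrix.transpose_mul, Matrix.sub_mul,
      Matrix.mul_sub]
    rw [h1, h2, ← mul_assoc M X Y, ← mul_assoc M Y X]
    abel

/-!
In block form `X = [[A, B], [C, E]]`, membership in `o(0ₘ ⊕ N)` for invertible `N` says exactly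
`C = 0` and `E ∈ o(N)`. Hence `X ↦ (A, E)` is a surjective Lie homomorphism
`o(0ₘ ⊕ N) → 𝔤𝔩ₘ × o(N)` whose kernel (the matrices with only a `B` block) is abelian, so
`o(0ₘ ⊕ N)` is solvable iff `𝔤𝔩ₘ` and `o(N)` are.

For `m ≤ 1`, `𝔤𝔩ₘ` is abelian; for `n ≤ 2`, `o(D)` is at most one-dimensional, since in
characteristic `≠ 2` its elements have zero diagonal. Conversely, for `m ≥ 2` and `n ≥ 3` both
algebras contain triples with `⁅x, y⁆ = a z`, `⁅y, z⁆ = b x`, `⁅z, x⁆ = c y` and `a, b, c ≠ 0`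
(a copy of `𝔰𝔩₂`, with constants `±2`, resp. three rotation generators), and such an `x ≠ 0`
lies in every term of the derived series.
-/

namespace LieAlgebra

variable {R L L' : Type*} [CommRing R] [LieRing L] [LieAlgebra R L] [LieRing L']
  [LieAlgebra R L']

theorem isSolvable_of_isSolvable_ker (f : L →ₗ⁅R⁆ L') [IsSolvable L'] [IsSolvable f.ker] :
    IsSolvable L := by
  obtain ⟨a, ha⟩ := IsSolvable.solvable (R := R) (L := L')
  obtain ⟨b, hb⟩ := IsSolvable.solvable (R := R) (L := f.ker)
  rw [LieIdeal.derivedSeries_eq_bot_iff] at hb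
  have hker : derivedSeries R L a ≤ f.ker := fun x hx =>
    LieHom.mem_ker.mpr <| by
      simpa [ha] using LieIdeal.derivedSeries_map_le (f := f) a (LieIdeal.mem_map hx)
  refine IsSolvable.mk (R := R) (k := b + a) (le_bot_iff.mp ?_)
  calc derivedSeries R L (b + a) = derivedSeriesOfIdeal R L b (derivedSeries R L a) := by
        rw [derivedSeries_def, derivedSeriesOfIdeal_add, derivedSeries_def]
    _ ≤ derivedSeriesOfIdeal R L b f.ker := derivedSeriesOfIdeal_mono hker b
    _ = ⊥ := hb

theorem isSolvable_prod_iff {L₁ L₂ : Type*} [LieRing L₁] [LieRing L₂] :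
    IsSolvable (L₁ × L₂) ↔ IsSolvable L₁ ∧ IsSolvable L₂ := by
  refine ⟨fun _ => ⟨?_, ?_⟩, fun ⟨_, _⟩ => ?_⟩
  · exact (LieHom.fst_surjective (R := ℤ) (L₁ := L₁) (L₂ := L₂)).lieAlgebra_isSolvable
  · exact (LieHom.snd_surjective (R := ℤ) (L₁ := L₁) (L₂ := L₂)).lieAlgebra_isSolvable
  have : IsSolvable (LieHom.fst ℤ L₁ L₂).ker := by
    refine Function.Injective.lieAlgebra_isSolvable
      (f := (LieHom.snd ℤ L₁ L₂).comp (LieHom.fst ℤ L₁ L₂).ker.incl) ?_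
    rintro ⟨x, hx⟩ ⟨y, hy⟩ h
    rw [LieHom.mem_ker] at hx hy
    exact Subtype.ext (Prod.ext (hx.trans hy.symm) h)
  exact isSolvable_of_isSolvable_ker (LieHom.fst ℤ L₁ L₂)

theorem not_isSolvable_of_lie_eq_smul_cyclic {K : Type*} [Field K] [LieAlgebra K L] {x y z : L}
    (hx : x ≠ 0) {a b c : K} (ha : a ≠ 0) (hb : b ≠ 0) (hc : c ≠ 0)
    (hxy : ⁅x, y⁆ = a • z) (hyz : ⁅y, z⁆ = b • x) (hzx : ⁅z, x⁆ = c • y) : ¬ IsSolvable L := by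
  intro _
  have mem_lie {I : LieIdeal K L} {u v w : L} {r : K} (hr : r ≠ 0) (h : ⁅u, v⁆ = r • w)
      (hu : u ∈ I) (hv : v ∈ I) : w ∈ ⁅I, I⁆ :=
    (Submodule.smul_mem_iff (⁅I, I⁆ : LieIdeal K L).toSubmodule hr).mp
      (h ▸ LieSubmodule.lie_mem_lie hu hv)
  have mem_derivedSeries (N : ℕ) :
      x ∈ derivedSeries K L N ∧ y ∈ derivedSeries K L N ∧ z ∈ derivedSeries K L N := by
    induction N with
    | zero => simp
    | succ N ih =>
      obtain ⟨hxN, hyN, hzN⟩ := ih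
      rw [derivedSeries_def, derivedSeriesOfIdeal_succ, ← derivedSeries_def]
      exact ⟨mem_lie hb hyz hyN hzN, mem_lie hc hzx hzN hxN, mem_lie ha hxy hxN hyN⟩
  obtain ⟨N, hN⟩ := IsSolvable.solvable (R := K) (L := L)
  exact hx (by simpa [hN] using (mem_derivedSeries N).1)

end LieAlgebra

section GeneralLinear

variable {k : Type} [Field k] {ι : Type} [Fintype ι] [DecidableEq ι]

instance Matrix.isLieAbelian_of_subsingleton [Subsingleton ι] : IsLieAbelian (Matrix ι ι k) := by
  refine ⟨fun A B => ?_⟩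
  rw [Ring.lie_def, sub_eq_zero]
  ext i j
  obtain rfl := Subsingleton.elim i j
  simp [mul_apply, Fintype.sum_subsingleton _ i, mul_comm]

theorem Matrix.not_isSolvable_of_ne (hchar : ringChar k ≠ 2) {i j : ι} (hij : i ≠ j) :
    ¬ IsSolvable (Matrix ι ι k) := by
  have h2 : (2 : k) ≠ 0 := Ring.two_ne_zero hchar
  refine not_isSolvable_of_lie_eq_smul_cyclic (x := single i i 1 - single j j 1)
    (y := single i j 1 + single j i 1) (z := single i j 1 - single j i 1) ?_ h2
    (neg_ne_zero.2 h2) (neg_ne_zero.2 h2) ?_ ?_ ?_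
  · intro h
    simpa [single_apply, hij.symm] using congr_fun₂ h i i
  all_goals
    simp only [Ring.lie_def, sub_mul, mul_sub, add_mul, mul_add, single_mul_single_same,
      single_mul_single_of_ne, ne_eq, hij, hij.symm, not_false_eq_true, mul_one]
    module

theorem Matrix.isSolvable_iff_subsingleton (hchar : ringChar k ≠ 2) :
    IsSolvable (Matrix ι ι k) ↔ Subsingleton ι := by
  refine ⟨fun hL => ?_, fun _ => inferInstance⟩
  by_contra h
  obtain ⟨i, j, hij⟩ := (not_subsingleton_iff_nontrivial.mp h).exists_pair_ne
  exact not_isSolvable_of_ne hchar hij hL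

end GeneralLinear

section Blocks

variable {k : Type} [Field k] {ι κ : Type} [Fintype ι] [Fintype κ] [DecidableEq ι]
  [DecidableEq κ] {N : Matrix κ κ k}

theorem mem_lieO_iff {M X : Matrix ι ι k} : X ∈ lieO k M ↔ Xᵀ * M + M * X = 0 := Iff.rfl

theorem fromBlocks_mem_lieO_iff (hN : IsUnit N) {A : Matrix ι ι k} {B : Matrix ι κ k}
    {C : Matrix κ ι k} {E : Matrix κ κ k} :
    fromBlocks A B C E ∈ lieO k (fromBlocks 0 0 0 N) ↔ C = 0 ∧ E ∈ lieO k N := by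
  have hdet := (isUnit_iff_isUnit_det N).1 hN
  have hC : Cᵀ * N = 0 ↔ C = 0 := by
    refine ⟨fun h => ?_, fun h => by simp [h]⟩
    rw [← transpose_eq_zero, ← mul_nonsing_inv_cancel_right N Cᵀ hdet, h, Matrix.zero_mul]
  have hC' : N * C = 0 ↔ C = 0 := by
    refine ⟨fun h => ?_, fun h => by simp [h]⟩
    rw [← nonsing_inv_mul_cancel_left N C hdet, h, Matrix.mul_zero]
  simp only [mem_lieO_iff, fromBlocks_transpose, fromBlocks_multiply, fromBlocks_add,
    ← fromBlocks_zero, fromBlocks_inj]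
  simp only [Matrix.mul_zero, Matrix.zero_mul, add_zero, zero_add, true_and, hC, hC',
    and_self_left]

theorem mem_lieO_fromBlocks_zero_iff (hN : IsUnit N) {X : Matrix (ι ⊕ κ) (ι ⊕ κ) k} :
    X ∈ lieO k (fromBlocks 0 0 0 N) ↔
      ∃ (A : Matrix ι ι k) (B : Matrix ι κ k) (E : Matrix κ κ k), E ∈ lieO k N ∧
        X = fromBlocks A B 0 E := by
  constructor
  · intro hX
    rw [← fromBlocks_toBlocks X, fromBlocks_mem_lieO_iff hN] at hX
    exact ⟨_, _, _, hX.2, by rw [← hX.1, fromBlocks_toBlocks]⟩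
  · rintro ⟨A, B, E, hE, rfl⟩
    exact (fromBlocks_mem_lieO_iff hN).2 ⟨rfl, hE⟩

theorem lie_fromBlocks_zero₂₁ (A A' : Matrix ι ι k) (B B' : Matrix ι κ k) (E E' : Matrix κ κ k) :
    ⁅fromBlocks A B 0 E, fromBlocks A' B' 0 E'⁆ =
      fromBlocks ⁅A, A'⁆ (A * B' + B * E' - (A' * B + B' * E)) 0 ⁅E, E'⁆ := by
  simp only [Ring.lie_def, fromBlocks_multiply, sub_eq_add_neg, fromBlocks_neg, fromBlocks_add]
  simp

theorem toBlocks₂₂_mem_lieO (hN : IsUnit N) {X : Matrix (ι ⊕ κ) (ι ⊕ κ) k}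
    (hX : X ∈ lieO k (fromBlocks 0 0 0 N)) : X.toBlocks₂₂ ∈ lieO k N := by
  obtain ⟨A, B, E, hE, rfl⟩ := (mem_lieO_fromBlocks_zero_iff hN).1 hX
  simpa using hE

def lieODiagBlocks (hN : IsUnit N) :
    lieO k (fromBlocks 0 0 0 N : Matrix (ι ⊕ κ) (ι ⊕ κ) k) →ₗ⁅k⁆ Matrix ι ι k × lieO k N where
  toFun X := (X.1.toBlocks₁₁, ⟨X.1.toBlocks₂₂, toBlocks₂₂_mem_lieO hN X.2⟩)
  map_add' _ _ := rfl
  map_smul' _ _ := rfl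
  map_lie' := by
    rintro ⟨X, hX⟩ ⟨Y, hY⟩
    obtain ⟨A, B, E, -, rfl⟩ := (mem_lieO_fromBlocks_zero_iff hN).1 hX
    obtain ⟨A', B', E', -, rfl⟩ := (mem_lieO_fromBlocks_zero_iff hN).1 hY
    ext : 1
    · simp [lie_fromBlocks_zero₂₁]
    · ext : 1
      simp [lie_fromBlocks_zero₂₁]

@[simp]
theorem lieODiagBlocks_apply (hN : IsUnit N)
    (X : lieO k (fromBlocks 0 0 0 N : Matrix (ι ⊕ κ) (ι ⊕ κ) k)) :
    lieODiagBlocks hN X = (X.1.toBlocks₁₁, ⟨X.1.toBlocks₂₂, toBlocks₂₂_mem_lieO hN X.2⟩) :=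
  rfl

theorem lieODiagBlocks_surjective (hN : IsUnit N) :
    Function.Surjective
      (lieODiagBlocks hN : lieO k (fromBlocks 0 0 0 N : Matrix (ι ⊕ κ) (ι ⊕ κ) k) → _) := by
  rintro ⟨A, E, hE⟩
  exact ⟨⟨fromBlocks A 0 0 E, (fromBlocks_mem_lieO_iff hN).2 ⟨rfl, hE⟩⟩, rfl⟩

theorem isLieAbelian_ker_lieODiagBlocks (hN : IsUnit N) :
    IsLieAbelian (lieODiagBlocks hN :
      lieO k (fromBlocks 0 0 0 N : Matrix (ι ⊕ κ) (ι ⊕ κ) k) →ₗ⁅k⁆ _).ker := by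
  have ker_eq {X : Matrix (ι ⊕ κ) (ι ⊕ κ) k} (hX : X ∈ lieO k (fromBlocks 0 0 0 N))
      (hXk : ⟨X, hX⟩ ∈ (lieODiagBlocks hN).ker) : ∃ B, X = fromBlocks 0 B 0 0 := by
    obtain ⟨A, B, E, -, rfl⟩ := (mem_lieO_fromBlocks_zero_iff hN).1 hX
    simp only [LieHom.mem_ker, lieODiagBlocks_apply, toBlocks_fromBlocks₁₁, toBlocks_fromBlocks₂₂,
      Prod.mk_eq_zero, Subtype.ext_iff, ZeroMemClass.coe_zero] at hXk
    exact ⟨B, by rw [hXk.1, hXk.2]⟩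
  refine ⟨fun ⟨⟨X, hX⟩, hXk⟩ ⟨⟨Y, hY⟩, hYk⟩ => ?_⟩
  obtain ⟨B, rfl⟩ := ker_eq hX hXk
  obtain ⟨B', rfl⟩ := ker_eq hY hYk
  ext : 2
  simp [lie_fromBlocks_zero₂₁]

theorem isSolvable_lieO_fromBlocks_zero_iff (hN : IsUnit N) :
    IsSolvable (lieO k (fromBlocks 0 0 0 N : Matrix (ι ⊕ κ) (ι ⊕ κ) k)) ↔
      IsSolvable (Matrix ι ι k) ∧ IsSolvable (lieO k N) := by
  rw [← isSolvable_prod_iff]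
  have := isLieAbelian_ker_lieODiagBlocks hN (ι := ι)
  exact ⟨fun _ => (lieODiagBlocks_surjective hN).lieAlgebra_isSolvable,
    fun _ => isSolvable_of_isSolvable_ker (lieODiagBlocks hN)⟩

end Blocks

section Diagonal

variable {k : Type} [Field k] {ι : Type} [Fintype ι] [DecidableEq ι] {D : ι → k}

theorem mem_lieO_diagonal_iff {E : Matrix ι ι k} :
    E ∈ lieO k (diagonal D) ↔ ∀ i j, E j i * D j + D i * E i j = 0 := by
  rw [mem_lieO_iff, ← Matrix.ext_iff]
  simp [mul_diagonal, diagonal_mul]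

theorem apply_self_eq_zero_of_mem_lieO_diagonal (hchar : ringChar k ≠ 2) (hD : ∀ i, D i ≠ 0)
    {E : Matrix ι ι k} (hE : E ∈ lieO k (diagonal D)) (i : ι) : E i i = 0 := by
  have h : (2 * D i) * E i i = 0 := by linear_combination mem_lieO_diagonal_iff.1 hE i i
  exact (mul_eq_zero.1 h).resolve_left (mul_ne_zero (Ring.two_ne_zero hchar) (hD i))

/-- The infinitesimal rotation of the `(a, b)`-coordinate plane for the form `∑ᵢ D i xᵢ²`. -/
def rotationGenerator (D : ι → k) (a b : ι) : Matrix ι ι k :=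
  D b • single a b 1 - D a • single b a 1

theorem rotationGenerator_mem_lieO (a b : ι) : rotationGenerator D a b ∈ lieO k (diagonal D) := by
  rw [mem_lieO_diagonal_iff]
  intro i j
  simp only [rotationGenerator, Matrix.sub_apply, Matrix.smul_apply, single_apply, smul_eq_mul]
  grind

theorem lie_rotationGenerator {a b c : ι} (hab : a ≠ b) (hbc : b ≠ c) (hca : c ≠ a) :
    ⁅rotationGenerator D a b, rotationGenerator D b c⁆ = (-D b) • rotationGenerator D c a := by
  simp only [Ring.lie_def, rotationGenerator, sub_mul, mul_sub, smul_mul_assoc, Matrix.mul_smul,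
    single_mul_single_same, single_mul_single_of_ne, ne_eq, hab, hbc, hca, hab.symm, hbc.symm,
    hca.symm, not_false_eq_true, smul_zero, mul_one]
  module

theorem not_isSolvable_lieO_diagonal (hD : ∀ i, D i ≠ 0) {a b c : ι} (hab : a ≠ b) (hbc : b ≠ c)
    (hca : c ≠ a) : ¬ IsSolvable (lieO k (diagonal D)) := by
  let R (i j : ι) : lieO k (diagonal D) := ⟨rotationGenerator D i j, rotationGenerator_mem_lieO i j⟩
  refine not_isSolvable_of_lie_eq_smul_cyclic (x := R a b) (y := R b c) (z := R c a) ?_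
    (neg_ne_zero.2 (hD b)) (neg_ne_zero.2 (hD c)) (neg_ne_zero.2 (hD a))
    (Subtype.ext (lie_rotationGenerator hab hbc hca))
    (Subtype.ext (lie_rotationGenerator hbc hca hab))
    (Subtype.ext (lie_rotationGenerator hca hab hbc))
  intro h
  have := congr_fun₂ (congr_arg Subtype.val h) a b
  simp [R, rotationGenerator, hab, hab.symm, hD b] at this

theorem eq_zero_of_mem_lieO_diagonal [Subsingleton ι] (hchar : ringChar k ≠ 2) (hD : ∀ i, D i ≠ 0)
    {E : Matrix ι ι k} (hE : E ∈ lieO k (diagonal D)) : E = 0 := by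
  ext i j
  obtain rfl := Subsingleton.elim i j
  exact apply_self_eq_zero_of_mem_lieO_diagonal hchar hD hE i

theorem eq_smul_rotationGenerator_of_mem_lieO_diagonal {D : Fin 2 → k} (hchar : ringChar k ≠ 2)
    (hD : ∀ i, D i ≠ 0) {E : Matrix (Fin 2) (Fin 2) k} (hE : E ∈ lieO k (diagonal D)) :
    E = (E 0 1 / D 1) • rotationGenerator D 0 1 := by
  have h10 := mem_lieO_diagonal_iff.1 hE 0 1
  have hdiag := apply_self_eq_zero_of_mem_lieO_diagonal hchar hD hE
  have hD1 := hD 1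
  ext i j
  fin_cases i <;> fin_cases j <;> simp [rotationGenerator, hdiag]
  · field_simp
  · field_simp
    linear_combination h10

theorem isLieAbelian_lieO_diagonal {n : ℕ} {D : Fin n → k} (hchar : ringChar k ≠ 2)
    (hD : ∀ i, D i ≠ 0) (hn : n ≤ 2) : IsLieAbelian (lieO k (diagonal D)) := by
  refine ⟨fun ⟨E, hE⟩ ⟨F, hF⟩ => Subtype.ext ?_⟩
  change ⁅E, F⁆ = 0
  obtain hn | rfl : n ≤ 1 ∨ n = 2 := by omega
  · have := Fin.subsingleton_iff_le_one.2 hn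
    rw [eq_zero_of_mem_lieO_diagonal hchar hD hE, zero_lie]
  · rw [eq_smul_rotationGenerator_of_mem_lieO_diagonal hchar hD hE,
      eq_smul_rotationGenerator_of_mem_lieO_diagonal hchar hD hF, smul_lie, lie_smul, lie_self,
      smul_zero, smul_zero]

theorem isSolvable_lieO_diagonal_iff {n : ℕ} {D : Fin n → k} (hchar : ringChar k ≠ 2)
    (hD : ∀ i, D i ≠ 0) : IsSolvable (lieO k (diagonal D)) ↔ n ≤ 2 := by
  refine ⟨fun h => ?_, fun hn => ?_⟩
  · by_contra hn
    obtain ⟨a, b, c, hab, hac, hbc⟩ :=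
      Fintype.two_lt_card_iff.1 (by simpa using hn : 2 < Fintype.card (Fin n))
    exact not_isSolvable_lieO_diagonal hD hab hbc hac.symm h
  · have := isLieAbelian_lieO_diagonal hchar hD hn
    infer_instance

end Diagonal

theorem lieO_solvable_iff_of_charNeTwo_general (k : Type) [Field k] (hchar : ringChar k ≠ 2)
    (m n : ℕ) (D : Fin n → k) (hD : ∀ i, D i ≠ 0) :
    LieAlgebra.IsSolvable
        ↥(lieO k (Matrix.fromBlocks 0 0 0 (Matrix.diagonal D)
          : Matrix (Fin m ⊕ Fin n) (Fin m ⊕ Fin n) k)) ↔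
      (m ≤ 1 ∧ n ≤ 2) := by
  have hN : IsUnit (diagonal D) := isUnit_diagonal.2 (Pi.isUnit_iff.2 fun i => (hD i).isUnit)
  rw [isSolvable_lieO_fromBlocks_zero_iff hN, Matrix.isSolvable_iff_subsingleton hchar,
    Fin.subsingleton_iff_le_one, isSolvable_lieO_diagonal_iff hchar hD]

/-- Let `char k ≠ 2`, `m, n ≥ 1`, `D` an invertible diagonal `n × n`
matrix and `M = 0ₘ ⊕ D`.  Then `o(M)` is solvable iff `m ≤ 1` and `n ≤ 2`. -/
theorem lieO_solvable_iff_of_charNeTwo (k : Type) [Field k] (hchar : ringChar k ≠ 2)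
    (m n : ℕ) (hm : 1 ≤ m) (hn : 1 ≤ n) (D : Fin n → k) (hD : ∀ i, D i ≠ 0) :
    LieAlgebra.IsSolvable
        ↥(lieO k (Matrix.fromBlocks 0 0 0 (Matrix.diagonal D)
          : Matrix (Fin m ⊕ Fin n) (Fin m ⊕ Fin n) k)) ↔
      (m ≤ 1 ∧ n ≤ 2) :=
  lieO_solvable_iff_of_charNeTwo_general k hchar m n D hD
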